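/- arXiv:1004.1786 — 2 statements merged into one kernel-verified Lean document; each statement's English description precedes it below -/
import Mathlib

section
/- Let (g,⟨·,·⟩,D,θ) be an extrinsic symmetric triple such that the Lie algebra g is semisimple. Then the triple is automatically full, i.e. [g₊⁻, g₋⁻] = g₋⁺. -/
/-!
Write `𝔤₊, 𝔤₋` for the `±1`-eigenspaces of `θ`, `𝔤⁺ = ker D` and `𝔤⁻ = ker (D² + 1)`.
The bracket `𝔪 = [𝔤₊⁻, 𝔤₋⁻]` lies in `𝔤₋⁺`, so by a dimension count it suffices that no nonzero
`z ∈ 𝔤₋⁺` is orthogonal to `𝔪`. The subspaces `𝔤₊` and `𝔤₋⁻` are images of `B`-self-adjoint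
projections, so `B` stays nondegenerate on them. By invariance of `B`, such a `z` commutes first
with `𝔤₊⁻`, hence with `𝔤₊⁺ = [𝔤₊⁻, 𝔤₊⁻]`, hence with `𝔤₊ = 𝔤₊⁺ ⊕ 𝔤₊⁻`, and finally with `𝔤₋`,
because `[z, 𝔤₋] ⊆ 𝔤₊` is orthogonal to `𝔤₊`. So `z` is central, hence zero as `𝔤` is semisimple.
-/

/-- The span of all brackets of elements of two submodules of a Lie algebra. -/
def bracketSpan {g : Type*} [LieRing g] [LieAlgebra ℝ g] (s t : Submodule ℝ g) :
    Submodule ℝ g :=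
  Submodule.span ℝ {z | ∃ x ∈ s, ∃ y ∈ t, z = ⁅x, y⁆}

open LinearMap (ker IsProj)

namespace LinearMap

variable {R M : Type*} [CommRing R] [AddCommGroup M] [Module R M] {f θ D π : M →ₗ[R] M} {x : M}
variable {K V : Type*} [Field K] [AddCommGroup V] [Module K V]

theorem mem_ker_sub_id : x ∈ ker (f - id) ↔ f x = x := by
  simp [sub_eq_zero]

theorem mem_ker_add_id : x ∈ ker (f + id) ↔ f x = -x := by
  simp [add_eq_zero_iff_eq_neg]

theorem mem_ker_comp_add_id : x ∈ ker (f ∘ₗ f + id) ↔ f (f x) = -x := by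
  simp [add_eq_zero_iff_eq_neg]

theorem isProj_ker_comp_add_id (hD : D ∘ₗ D ∘ₗ D = -D) :
    IsProj (ker (D ∘ₗ D + id)) (-(D ∘ₗ D)) where
  map_mem x := by
    have hDx := congr($hD (D x))
    simp only [comp_apply, neg_apply] at hDx
    simp [hDx]
  map_id x hx := by rw [neg_apply, comp_apply, mem_ker_comp_add_id.1 hx, neg_neg]

theorem add_apply_apply_mem_ker (hD : D ∘ₗ D ∘ₗ D = -D) (x : M) : x + D (D x) ∈ ker D := by
  have hDx := congr($hD x)
  simp only [comp_apply, neg_apply] at hDx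
  rw [mem_ker, map_add, hDx, add_neg_cancel]

theorem apply_apply_comm_of_comp_eq_neg (hDθ : D ∘ₗ θ = -(θ ∘ₗ D)) (x : M) :
    θ (D (D x)) = D (D (θ x)) := by
  have h := fun v ↦ congr($hDθ v)
  simp only [comp_apply, neg_apply] at h
  rw [h, map_neg, h, neg_neg]

section Involution

variable [NeZero (2 : K)] {θ : V →ₗ[K] V}

theorem isProj_ker_sub_id (hθ : θ ∘ₗ θ = id) :
    IsProj (ker (θ - id)) ((2⁻¹ : K) • (id + θ)) where
  map_mem x := by
    rw [mem_ker_sub_id]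
    simp only [smul_apply, add_apply, id_apply, map_smul, map_add, ← comp_apply θ θ, hθ,
      add_comm]
  map_id x hx := by
    rw [smul_apply, add_apply, id_apply, mem_ker_sub_id.1 hx, ← two_smul K,
      inv_smul_smul₀ two_ne_zero]

theorem isProj_ker_add_id (hθ : θ ∘ₗ θ = id) :
    IsProj (ker (θ + id)) ((2⁻¹ : K) • (id - θ)) where
  map_mem x := by
    rw [mem_ker_add_id]
    simp only [smul_apply, sub_apply, id_apply, map_smul, map_sub, ← comp_apply θ θ, hθ,
      ← smul_neg, neg_sub]
  map_id x hx := by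
    rw [smul_apply, sub_apply, id_apply, mem_ker_add_id.1 hx, sub_neg_eq_add, ← two_smul K,
      inv_smul_smul₀ two_ne_zero]

theorem ker_sub_id_sup_ker_add_id (hθ : θ ∘ₗ θ = id) : ker (θ - id) ⊔ ker (θ + id) = ⊤ :=
  eq_top_iff.2 fun x _ ↦ Submodule.mem_sup.2 ⟨_, (isProj_ker_sub_id hθ).map_mem x,
    _, (isProj_ker_add_id hθ).map_mem x, by
      rw [smul_apply, smul_apply, ← smul_add, add_apply, sub_apply, add_add_sub_cancel,
        id_apply, ← two_smul K, inv_smul_smul₀ two_ne_zero]⟩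

end Involution

namespace BilinForm

variable {B : LinearMap.BilinForm R M} {X Y : Submodule R M}

theorem isAdjointPair_of_involutive (hθ : θ ∘ₗ θ = id) (hB : B.IsOrthogonal θ) :
    IsAdjointPair B B θ θ := fun x y ↦ by
  rw [← hB, ← LinearMap.comp_apply θ θ, hθ, id_apply]

theorem isAdjointPair_neg_comp_self (hD : ∀ x y, B (D x) y = -B x (D y)) :
    IsAdjointPair B B (-(D ∘ₗ D)) (-(D ∘ₗ D)) := fun x y ↦ by
  simp only [Pi.neg_apply, LinearMap.comp_apply, map_neg, LinearMap.neg_apply, hD, neg_neg]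

theorem separatingLeft_restrict_of_isProj (hB : B.SeparatingLeft) (hπ : IsAdjointPair B B π π)
    (hY : IsProj Y π) : (B.restrict Y).SeparatingLeft := fun w hw ↦
  Subtype.ext <| hB w fun v ↦ by
    rw [← hY.map_id w w.2, hπ]
    exact hw ⟨π v, hY.map_mem v⟩

theorem separatingLeft_restrict_inf_of_isProj (hX : (B.restrict X).SeparatingLeft)
    (hπ : IsAdjointPair B B π π) (hY : IsProj Y π) (hπX : ∀ x ∈ X, π x ∈ X) :
    (B.restrict (X ⊓ Y)).SeparatingLeft := fun w hw ↦ by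
  have hwX : (⟨w, w.2.1⟩ : X) = 0 := hX _ fun v ↦ by
    change B w v = 0
    rw [← hY.map_id w w.2.2, hπ]
    exact hw ⟨π v, hπX v v.2, hY.map_mem v⟩
  have h0 : (w : M) = 0 := congr_arg Subtype.val hwX
  exact Subtype.ext h0

variable [NeZero (2 : K)] {B : LinearMap.BilinForm K V} {θ D : V →ₗ[K] V}

theorem separatingLeft_restrict_ker_sub_id (hB : B.SeparatingLeft) (hθ : θ ∘ₗ θ = id)
    (hBθ : B.IsOrthogonal θ) : (B.restrict (ker (θ - id))).SeparatingLeft :=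
  separatingLeft_restrict_of_isProj hB
    ((isAdjointPair_id.add (isAdjointPair_of_involutive hθ hBθ)).smul _) (isProj_ker_sub_id hθ)

theorem separatingLeft_restrict_ker_add_id (hB : B.SeparatingLeft) (hθ : θ ∘ₗ θ = id)
    (hBθ : B.IsOrthogonal θ) : (B.restrict (ker (θ + id))).SeparatingLeft :=
  separatingLeft_restrict_of_isProj hB
    ((isAdjointPair_id.sub (isAdjointPair_of_involutive hθ hBθ)).smul _) (isProj_ker_add_id hθ)

theorem separatingLeft_restrict_ker_add_id_inf_ker_comp_add_id (hB : B.SeparatingLeft)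
    (hθ : θ ∘ₗ θ = id) (hBθ : B.IsOrthogonal θ) (hD : ∀ x y, B (D x) y = -B x (D y))
    (hD3 : D ∘ₗ D ∘ₗ D = -D) (hDθ : D ∘ₗ θ = -(θ ∘ₗ D)) :
    (B.restrict (ker (θ + id) ⊓ ker (D ∘ₗ D + id))).SeparatingLeft :=
  separatingLeft_restrict_inf_of_isProj (separatingLeft_restrict_ker_add_id hB hθ hBθ)
    (isAdjointPair_neg_comp_self hD) (isProj_ker_comp_add_id hD3) fun x hx ↦ by
      rw [mem_ker_add_id] at hx ⊢
      rw [LinearMap.neg_apply, map_neg, LinearMap.comp_apply,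
        apply_apply_comm_of_comp_eq_neg hDθ, hx, map_neg, map_neg]

end BilinForm

theorem BilinForm.eq_of_le_of_forall_apply_eq_zero [FiniteDimensional K V]
    {B : LinearMap.BilinForm K V} {S X : Submodule K V} (hSX : S ≤ X)
    (h : ∀ z ∈ X, (∀ u ∈ S, B z u = 0) → z = 0) : S = X := by
  have hinj : Function.Injective (B.domRestrict₁₂ X S) := by
    refine (injective_iff_map_eq_zero _).2 fun z hz ↦ Subtype.ext <| h z z.2 fun u hu ↦ ?_
    exact congr($hz ⟨u, hu⟩)
  refine Submodule.eq_of_le_of_finrank_le hSX ?_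
  simpa [Subspace.dual_finrank_eq] using finrank_le_finrank_of_injective hinj

end LinearMap

open LinearMap (mem_ker mem_ker_sub_id mem_ker_add_id mem_ker_comp_add_id)
open LieAlgebra

section LieAlgebra

variable {K L : Type*} [Field K] [LieRing L] [LieAlgebra K L] {θ D : L →ₗ[K] L} {x y : L}

theorem lie_mem_ker_add_id_of_mem_ker_sub_id (hθ : ∀ x y, θ ⁅x, y⁆ = ⁅θ x, θ y⁆)
    (hx : x ∈ ker (θ - LinearMap.id)) (hy : y ∈ ker (θ + LinearMap.id)) :
    ⁅x, y⁆ ∈ ker (θ + LinearMap.id) := by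
  rw [mem_ker_add_id, hθ, mem_ker_sub_id.1 hx, mem_ker_add_id.1 hy, lie_neg]

theorem lie_mem_ker_sub_id_of_mem_ker_add_id (hθ : ∀ x y, θ ⁅x, y⁆ = ⁅θ x, θ y⁆)
    (hx : x ∈ ker (θ + LinearMap.id)) (hy : y ∈ ker (θ + LinearMap.id)) :
    ⁅x, y⁆ ∈ ker (θ - LinearMap.id) := by
  rw [mem_ker_sub_id, hθ, mem_ker_add_id.1 hx, mem_ker_add_id.1 hy, neg_lie, lie_neg, neg_neg]

theorem lie_mem_ker_comp_add_id_of_mem_ker (hD : ∀ x y, D ⁅x, y⁆ = ⁅D x, y⁆ + ⁅x, D y⁆)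
    (hx : x ∈ ker D) (hy : y ∈ ker (D ∘ₗ D + LinearMap.id)) :
    ⁅x, y⁆ ∈ ker (D ∘ₗ D + LinearMap.id) := by
  rw [mem_ker] at hx
  rw [mem_ker_comp_add_id] at hy ⊢
  rw [hD, hx, zero_lie, zero_add, hD, hx, zero_lie, zero_add, hy, lie_neg]

theorem lie_mem_ker_of_mem_ker_comp_add_id [NeZero (3 : K)]
    (hD : ∀ x y, D ⁅x, y⁆ = ⁅D x, y⁆ + ⁅x, D y⁆) (hD3 : D ∘ₗ D ∘ₗ D = -D)
    (hx : x ∈ ker (D ∘ₗ D + LinearMap.id)) (hy : y ∈ ker (D ∘ₗ D + LinearMap.id)) :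
    ⁅x, y⁆ ∈ ker D := by
  rw [mem_ker_comp_add_id] at hx hy
  -- expanding with `D² = -1` on `x` and `y` gives `D³⁅x, y⁆ = -4 D⁅x, y⁆`
  have hD3xy := congr($hD3 ⁅x, y⁆)
  simp only [LinearMap.comp_apply, LinearMap.neg_apply, hD, map_add, hx, hy, neg_lie, lie_neg,
    map_neg] at hD3xy
  have h3 : (3 : K) • D ⁅x, y⁆ = 0 := by
    rw [hD]
    linear_combination (norm := module) -hD3xy
  exact (smul_eq_zero.1 h3).resolve_left three_ne_zero

theorem ker_add_id_le_ker_ad {B : LinearMap.BilinForm K L}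
    (hP : (B.restrict (ker (θ - LinearMap.id))).SeparatingLeft)
    (hinv : ∀ x y z : L, B ⁅x, y⁆ z + B y ⁅x, z⁆ = 0) (hθ : ∀ x y, θ ⁅x, y⁆ = ⁅θ x, θ y⁆)
    {z : L} (hz : z ∈ ker (θ + LinearMap.id)) (hzP : ker (θ - LinearMap.id) ≤ ker (ad K L z)) :
    ker (θ + LinearMap.id) ≤ ker (ad K L z) := fun x hx ↦ by
  have h0 : (⟨⁅z, x⁆, lie_mem_ker_sub_id_of_mem_ker_add_id hθ hz hx⟩ :
      ker (θ - LinearMap.id)) = 0 :=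
    hP _ fun y ↦ by
      have hzy : ⁅z, (y : L)⁆ = 0 := hzP y.2
      have := hinv z x y
      rwa [hzy, map_zero, add_zero] at this
  rw [mem_ker, ad_apply]
  exact congr_arg Subtype.val h0

end LieAlgebra

section BracketSpan

variable {g : Type*} [LieRing g] [LieAlgebra ℝ g]

theorem bracketSpan_le_iff {s t u : Submodule ℝ g} :
    bracketSpan s t ≤ u ↔ ∀ x ∈ s, ∀ y ∈ t, ⁅x, y⁆ ∈ u := by
  rw [bracketSpan, Submodule.span_le]
  constructor
  · intro h x hx y hy
    exact h ⟨x, hx, y, hy, rfl⟩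
  · rintro h _ ⟨x, hx, y, hy, rfl⟩
    exact h x hx y hy

theorem bracketSpan_le_ker_ad {s t : Submodule ℝ g} {z : g} (hs : s ≤ ker (ad ℝ g z))
    (ht : t ≤ ker (ad ℝ g z)) : bracketSpan s t ≤ ker (ad ℝ g z) :=
  bracketSpan_le_iff.2 fun x hx y hy ↦ by
    have hzx : ⁅z, x⁆ = 0 := hs hx
    have hzy : ⁅z, y⁆ = 0 := ht hy
    rw [mem_ker, ad_apply, leibniz_lie, hzx, hzy, zero_lie, lie_zero, add_zero]

variable {B : LinearMap.BilinForm ℝ g} {D θ : g →ₗ[ℝ] g}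

local notation "𝔤₊" => ker (θ - LinearMap.id)
local notation "𝔤₋" => ker (θ + LinearMap.id)
local notation "𝔤⁺" => ker D
local notation "𝔤⁻" => ker (D ∘ₗ D + LinearMap.id)

theorem ker_sub_id_le_ker_ad (hNI : (B.restrict (𝔤₋ ⊓ 𝔤⁻)).SeparatingLeft)
    (hinv : ∀ x y z : g, B ⁅x, y⁆ z + B y ⁅x, z⁆ = 0)
    (hDder : ∀ x y : g, D ⁅x, y⁆ = ⁅D x, y⁆ + ⁅x, D y⁆) (hD3 : D ∘ₗ D ∘ₗ D = -D)
    (hθlie : ∀ x y : g, θ ⁅x, y⁆ = ⁅θ x, θ y⁆) (hDθ : D ∘ₗ θ = -(θ ∘ₗ D))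
    (hext : bracketSpan (𝔤₊ ⊓ 𝔤⁻) (𝔤₊ ⊓ 𝔤⁻) = 𝔤₊ ⊓ 𝔤⁺) {z : g} (hz : z ∈ 𝔤₋ ⊓ 𝔤⁺)
    (hzm : ∀ u ∈ bracketSpan (𝔤₊ ⊓ 𝔤⁻) (𝔤₋ ⊓ 𝔤⁻), B z u = 0) :
    𝔤₊ ≤ ker (ad ℝ g z) := by
  have hPI : 𝔤₊ ⊓ 𝔤⁻ ≤ ker (ad ℝ g z) := by
    intro x hx
    have hzx : ⁅z, x⁆ ∈ 𝔤₋ ⊓ 𝔤⁻ :=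
      ⟨by rw [← lie_skew]; exact neg_mem (lie_mem_ker_add_id_of_mem_ker_sub_id hθlie hx.1 hz.1),
        lie_mem_ker_comp_add_id_of_mem_ker hDder hz.2 hx.2⟩
    have h0 : (⟨⁅z, x⁆, hzx⟩ : ↥(𝔤₋ ⊓ 𝔤⁻)) = 0 :=
      hNI _ fun y ↦ by
        have hzxy : B ⁅z, x⁆ y = B z ⁅x, y⁆ := by
          rw [← lie_skew, map_neg, LinearMap.neg_apply, neg_eq_iff_eq_neg,
            ← eq_neg_iff_add_eq_zero.2 (hinv x z y)]
        change B ⁅z, x⁆ y = 0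
        rw [hzxy]
        exact hzm _ (Submodule.subset_span ⟨x, hx, y, y.2, rfl⟩)
    rw [mem_ker, ad_apply]
    exact congr_arg Subtype.val h0
  have hPK : 𝔤₊ ⊓ 𝔤⁺ ≤ ker (ad ℝ g z) := hext ▸ bracketSpan_le_ker_ad hPI hPI
  intro x hx
  have hDDx : D (D x) ∈ 𝔤₊ := by
    rw [mem_ker_sub_id, LinearMap.apply_apply_comm_of_comp_eq_neg hDθ, mem_ker_sub_id.1 hx]
  have hsplit := add_mem (hPK ⟨add_mem hx hDDx, LinearMap.add_apply_apply_mem_ker hD3 x⟩)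
    (hPI ⟨neg_mem hDDx, (LinearMap.isProj_ker_comp_add_id hD3).map_mem x⟩)
  rwa [add_neg_cancel_right] at hsplit

end BracketSpan

theorem stmt6_general {g : Type*} [LieRing g] [LieAlgebra ℝ g] [Module.Finite ℝ g]
    [LieAlgebra.IsSemisimple ℝ g]
    (B : LinearMap.BilinForm ℝ g)
    (hnd : B.Nondegenerate)
    (hinv : ∀ x y z : g, B ⁅x, y⁆ z + B y ⁅x, z⁆ = 0)
    (D : g →ₗ[ℝ] g)
    (hDder : ∀ x y : g, D ⁅x, y⁆ = ⁅D x, y⁆ + ⁅x, D y⁆)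
    (hDskew : ∀ x y, B (D x) y = -(B x (D y)))
    (hD3 : D ∘ₗ D ∘ₗ D = -D)
    (θ : g →ₗ[ℝ] g)
    (hθ2 : θ ∘ₗ θ = LinearMap.id)
    (hθlie : ∀ x y : g, θ ⁅x, y⁆ = ⁅θ x, θ y⁆)
    (hθiso : ∀ x y, B (θ x) (θ y) = B x y)
    (hDθ : D ∘ₗ θ = -(θ ∘ₗ D))
    (hext : bracketSpan
        (LinearMap.ker (θ - LinearMap.id) ⊓ LinearMap.ker (D ∘ₗ D + LinearMap.id))
        (LinearMap.ker (θ - LinearMap.id) ⊓ LinearMap.ker (D ∘ₗ D + LinearMap.id)) =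
        LinearMap.ker (θ - LinearMap.id) ⊓ LinearMap.ker D) :
    bracketSpan
        (LinearMap.ker (θ - LinearMap.id) ⊓ LinearMap.ker (D ∘ₗ D + LinearMap.id))
        (LinearMap.ker (θ + LinearMap.id) ⊓ LinearMap.ker (D ∘ₗ D + LinearMap.id)) =
      LinearMap.ker (θ + LinearMap.id) ⊓ LinearMap.ker D := by
  have hP := B.separatingLeft_restrict_ker_sub_id hnd.1 hθ2 hθiso
  have hNI :=
    B.separatingLeft_restrict_ker_add_id_inf_ker_comp_add_id hnd.1 hθ2 hθiso hDskew hD3 hDθ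
  refine B.eq_of_le_of_forall_apply_eq_zero (bracketSpan_le_iff.2 fun x hx y hy ↦
    ⟨lie_mem_ker_add_id_of_mem_ker_sub_id hθlie hx.1 hy.1,
      lie_mem_ker_of_mem_ker_comp_add_id hDder hD3 hx.2 hy.2⟩) fun z hz hzm ↦ ?_
  have hzP := ker_sub_id_le_ker_ad hNI hinv hDder hD3 hθlie hDθ hext hz hzm
  have hzN := ker_add_id_le_ker_ad hP hinv hθlie hz.1 hzP
  have had : ad ℝ g z = 0 :=
    LinearMap.ker_eq_top.1 <| top_le_iff.1 <|
      LinearMap.ker_sub_id_sup_ker_add_id hθ2 ▸ sup_le hzP hzN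
  have hzc : z ∈ center ℝ g := fun x ↦ by
    rw [← lie_skew, ← ad_apply (R := ℝ), had, LinearMap.zero_apply, neg_zero]
  rwa [center_eq_bot, LieSubmodule.mem_bot] at hzc

/-- An extrinsic symmetric triple whose Lie algebra is semisimple is automatically full:
[g₊⁻, g₋⁻] = g₋⁺. -/
theorem stmt6 {g : Type*} [LieRing g] [LieAlgebra ℝ g] [Module.Finite ℝ g]
    [LieAlgebra.IsSemisimple ℝ g]
    (B : LinearMap.BilinForm ℝ g)
    (hsymm : ∀ x y, B x y = B y x)
    (hnd : B.Nondegenerate)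
    (hinv : ∀ x y z : g, B ⁅x, y⁆ z + B y ⁅x, z⁆ = 0)
    (D : g →ₗ[ℝ] g)
    (hDder : ∀ x y : g, D ⁅x, y⁆ = ⁅D x, y⁆ + ⁅x, D y⁆)
    (hDskew : ∀ x y, B (D x) y = -(B x (D y)))
    (hD3 : D ∘ₗ D ∘ₗ D = -D)
    (θ : g →ₗ[ℝ] g)
    (hθ2 : θ ∘ₗ θ = LinearMap.id)
    (hθlie : ∀ x y : g, θ ⁅x, y⁆ = ⁅θ x, θ y⁆)
    (hθiso : ∀ x y, B (θ x) (θ y) = B x y)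
    (hDθ : D ∘ₗ θ = -(θ ∘ₗ D))
    (hext : bracketSpan
        (LinearMap.ker (θ - LinearMap.id) ⊓ LinearMap.ker (D ∘ₗ D + LinearMap.id))
        (LinearMap.ker (θ - LinearMap.id) ⊓ LinearMap.ker (D ∘ₗ D + LinearMap.id)) =
        LinearMap.ker (θ - LinearMap.id) ⊓ LinearMap.ker D) :
    bracketSpan
        (LinearMap.ker (θ - LinearMap.id) ⊓ LinearMap.ker (D ∘ₗ D + LinearMap.id))
        (LinearMap.ker (θ + LinearMap.id) ⊓ LinearMap.ker (D ∘ₗ D + LinearMap.id)) =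
      LinearMap.ker (θ + LinearMap.id) ⊓ LinearMap.ker D :=
  stmt6_general B hnd hinv D hDder hDskew hD3 θ hθ2 hθlie hθiso hDθ hext
end

section
/- Let V and R be finite-dimensional real vector spaces, D an endomorphism of V with D² = −id, and θ an involution of V with D∘θ = −θ∘D. Set V₋ := ker(θ + id). Then the map ω ↦ b_ω, where b_ω(x,y) := ω(Dx, y) for x,y ∈ V₋, is a linear isomorphism from the space {ω : V × V → R bilinear : ω(x,y) = −ω(y,x), ω(Dx,y) + ω(x,Dy) = 0, and ω(θx,θy) = −ω(x,y) for all x,y ∈ V} onto the space of symmetric bilinear maps V₋ × V₋ → R. -/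
open LinearMap

/-- The map ω ↦ b_ω, b_ω(x,y) = ω(Dx,y) on V₋ = ker(θ + id). -/
noncomputable def iota9 {V R : Type*} [AddCommGroup V] [Module ℝ V]
    [AddCommGroup R] [Module ℝ R] (D θ : V →ₗ[ℝ] V) (ω : V →ₗ[ℝ] V →ₗ[ℝ] R) :
    ↥(LinearMap.ker (θ + LinearMap.id)) →ₗ[ℝ]
      ↥(LinearMap.ker (θ + LinearMap.id)) →ₗ[ℝ] R :=
  (ω ∘ₗ (D ∘ₗ (LinearMap.ker (θ + LinearMap.id)).subtype)).compl₂
    ((LinearMap.ker (θ + LinearMap.id)).subtype)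

/-!
With V₊ = ker(θ - id), every x ∈ V splits as x = p x - D (q x) with p x = (x - θx)/2 ∈ V₋ and
q x = D((x + θx)/2) ∈ V₋, since D maps V₊ onto V₋ and D² = -id. A θ-anti-invariant ω vanishes
on V₋ × V₋, and by D-invariance also on V₊ × V₊ = D V₋ × D V₋, so only the mixed terms survive:
ω(x,y) = b_ω(p x, q y) - b_ω(q x, p y). This shows injectivity, and for symmetric b the same
formula read backwards, ω(x,y) = b(q y, p x) - b(q x, p y), defines the preimage of b.
-/

section

variable {V R : Type*} [AddCommGroup V] [Module ℝ V] [AddCommGroup R] [Module ℝ R]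
  {D θ : V →ₗ[ℝ] V}

local notation "V₋" => LinearMap.ker (θ + LinearMap.id)

theorem mem_ker_add_id_iff {x : V} : x ∈ V₋ ↔ θ x = -x := by
  simp [add_eq_zero_iff_eq_neg]

variable (hD : ∀ x, D (D x) = -x) (hθ : ∀ x, θ (θ x) = x) (hDθ : ∀ x, D (θ x) = -θ (D x))

include hθ in
theorem smul_sub_apply_mem_ker_add_id (x : V) : (2⁻¹ : ℝ) • (x - θ x) ∈ V₋ := by
  rw [mem_ker_add_id_iff, map_smul, map_sub, hθ]
  module

include hθ hDθ in
theorem smul_apply_add_apply_mem_ker_add_id (x : V) : (2⁻¹ : ℝ) • D (x + θ x) ∈ V₋ := by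
  rw [mem_ker_add_id_iff, map_smul, ← neg_neg (θ (D _)), ← hDθ, map_add, hθ, add_comm, smul_neg]

noncomputable def minusPart : V →ₗ[ℝ] V₋ :=
  codRestrict _ ((2⁻¹ : ℝ) • (LinearMap.id - θ)) (smul_sub_apply_mem_ker_add_id hθ)

noncomputable def rotPlusPart : V →ₗ[ℝ] V₋ :=
  codRestrict _ ((2⁻¹ : ℝ) • D ∘ₗ (LinearMap.id + θ))
    (smul_apply_add_apply_mem_ker_add_id hθ hDθ)

theorem coe_minusPart (x : V) : (minusPart hθ x : V) = (2⁻¹ : ℝ) • (x - θ x) := rfl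

theorem coe_rotPlusPart (x : V) :
    (rotPlusPart hθ hDθ x : V) = (2⁻¹ : ℝ) • D (x + θ x) := rfl

include hD in
theorem minusPart_sub_D_rotPlusPart (x : V) :
    (minusPart hθ x : V) - D (rotPlusPart hθ hDθ x) = x := by
  rw [coe_minusPart, coe_rotPlusPart, map_smul, hD]
  module

theorem minusPart_D (x : V) : minusPart hθ (D x) = rotPlusPart hθ hDθ x := by
  ext
  rw [coe_minusPart, coe_rotPlusPart, map_add, hDθ]
  module

include hD in
theorem rotPlusPart_D (x : V) : rotPlusPart hθ hDθ (D x) = -minusPart hθ x := by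
  ext
  rw [coe_rotPlusPart, Submodule.coe_neg, coe_minusPart, map_add, hD, hDθ, hD, map_neg]
  module

theorem minusPart_θ (x : V) : minusPart hθ (θ x) = -minusPart hθ x := by
  ext
  rw [Submodule.coe_neg, coe_minusPart, coe_minusPart, hθ]
  module

theorem rotPlusPart_θ (x : V) :
    rotPlusPart hθ hDθ (θ x) = rotPlusPart hθ hDθ x := by
  ext
  rw [coe_rotPlusPart, coe_rotPlusPart, hθ, add_comm]

theorem minusPart_coe (u : V₋) : minusPart hθ u = u := by
  ext
  rw [coe_minusPart, mem_ker_add_id_iff.mp u.2]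
  module

theorem rotPlusPart_coe (u : V₋) : rotPlusPart hθ hDθ u = 0 := by
  ext
  rw [coe_rotPlusPart, mem_ker_add_id_iff.mp u.2]
  simp

variable {ω : V →ₗ[ℝ] V →ₗ[ℝ] R}

theorem iota9_apply (x y : V₋) : iota9 D θ ω x y = ω (D x) y := rfl

theorem iota9_symm (h₁ : ∀ x y, ω x y = -ω y x) (h₂ : ∀ x y, ω (D x) y + ω x (D y) = 0)
    (x y : V₋) : iota9 D θ ω x y = iota9 D θ ω y x := by
  rw [iota9_apply, iota9_apply, h₁, eq_comm, ← add_eq_zero_iff_eq_neg]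
  exact h₂ y x

theorem apply_coe_coe_eq_zero (h₃ : ∀ x y, ω (θ x) (θ y) = -ω x y) (u v : V₋) :
    ω u v = 0 := by
  have h := h₃ u v
  simp only [mem_ker_add_id_iff.mp u.2, mem_ker_add_id_iff.mp v.2, map_neg, LinearMap.neg_apply,
    neg_neg] at h
  have : IsAddTorsionFree R := .of_isTorsionFree ℝ R
  exact self_eq_neg.mp h

include hD in
theorem apply_D_D_of_skew (h₂ : ∀ x y, ω (D x) y + ω x (D y) = 0) (x y : V) :
    ω (D x) (D y) = ω x y := by
  rw [eq_neg_of_add_eq_zero_left (h₂ x (D y)), hD, map_neg, neg_neg]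

include hD in
theorem eq_iota9_minusPart_rotPlusPart (h₂ : ∀ x y, ω (D x) y + ω x (D y) = 0)
    (h₃ : ∀ x y, ω (θ x) (θ y) = -ω x y) (x y : V) :
    ω x y = iota9 D θ ω (minusPart hθ x) (rotPlusPart hθ hDθ y)
      - iota9 D θ ω (rotPlusPart hθ hDθ x) (minusPart hθ y) := by
  set p := minusPart hθ
  set q := rotPlusPart hθ hDθ
  have hpp : ω (p x) (p y) = 0 := apply_coe_coe_eq_zero h₃ _ _
  have hqq : ω (D (q x)) (D (q y)) = 0 := by
    rw [apply_D_D_of_skew hD h₂]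
    exact apply_coe_coe_eq_zero h₃ _ _
  have hpq : ω (p x) (D (q y)) = -ω (D (p x)) (q y) := eq_neg_of_add_eq_zero_right (h₂ _ _)
  calc ω x y = ω (p x - D (q x)) (p y - D (q y)) := by
        rw [minusPart_sub_D_rotPlusPart hD, minusPart_sub_D_rotPlusPart hD]
    _ = ω (D (p x)) (q y) - ω (D (q x)) (p y) := by
        simp only [map_sub, LinearMap.sub_apply, hpp, hqq, hpq]
        abel

variable (b : ker (θ + LinearMap.id) →ₗ[ℝ] ker (θ + LinearMap.id) →ₗ[ℝ] R)

noncomputable def iota9Inv : V →ₗ[ℝ] V →ₗ[ℝ] R :=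
  ((b ∘ₗ rotPlusPart hθ hDθ).compl₂ (minusPart hθ)).flip
    - (b ∘ₗ rotPlusPart hθ hDθ).compl₂ (minusPart hθ)

theorem iota9Inv_apply (x y : V) :
    iota9Inv hθ hDθ b x y =
      b (rotPlusPart hθ hDθ y) (minusPart hθ x) - b (rotPlusPart hθ hDθ x) (minusPart hθ y) :=
  rfl

theorem iota9Inv_antisymm (x y : V) : iota9Inv hθ hDθ b x y = -iota9Inv hθ hDθ b y x := by
  rw [iota9Inv_apply, iota9Inv_apply, neg_sub]

include hD in
theorem iota9Inv_D_skew (hb : ∀ x y, b x y = b y x) (x y : V) :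
    iota9Inv hθ hDθ b (D x) y + iota9Inv hθ hDθ b x (D y) = 0 := by
  simp only [iota9Inv_apply, minusPart_D hθ hDθ, rotPlusPart_D hD, map_neg, LinearMap.neg_apply,
    hb (rotPlusPart hθ hDθ y) (rotPlusPart hθ hDθ x), hb (minusPart hθ x) (minusPart hθ y)]
  abel

theorem iota9Inv_θ_θ (x y : V) :
    iota9Inv hθ hDθ b (θ x) (θ y) = -iota9Inv hθ hDθ b x y := by
  simp only [iota9Inv_apply, minusPart_θ, rotPlusPart_θ, map_neg]
  abel

include hD in
theorem iota9_iota9Inv : iota9 D θ (iota9Inv hθ hDθ b) = b := by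
  ext x y
  rw [iota9_apply, iota9Inv_apply, minusPart_D hθ hDθ, rotPlusPart_D hD, minusPart_coe,
    minusPart_coe, rotPlusPart_coe, rotPlusPart_coe, map_zero, map_neg, LinearMap.neg_apply,
    sub_neg_eq_add, zero_add]

end

theorem stmt9_general {V R : Type*} [AddCommGroup V] [Module ℝ V]
    [AddCommGroup R] [Module ℝ R]
    (D : V →ₗ[ℝ] V)
    (hD2 : D ∘ₗ D = -LinearMap.id)
    (θ : V →ₗ[ℝ] V)
    (hθ2 : θ ∘ₗ θ = LinearMap.id)
    (hDθ : D ∘ₗ θ = -(θ ∘ₗ D)) :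
    (∀ ω η : V →ₗ[ℝ] V →ₗ[ℝ] R, iota9 D θ (ω + η) = iota9 D θ ω + iota9 D θ η) ∧
      (∀ (c : ℝ) (ω : V →ₗ[ℝ] V →ₗ[ℝ] R), iota9 D θ (c • ω) = c • iota9 D θ ω) ∧
      Set.BijOn (iota9 (R := R) D θ)
        {ω : V →ₗ[ℝ] V →ₗ[ℝ] R | (∀ x y, ω x y = -(ω y x)) ∧
          (∀ x y, ω (D x) y + ω x (D y) = 0) ∧
          (∀ x y, ω (θ x) (θ y) = -(ω x y))}
        {b : ↥(LinearMap.ker (θ + LinearMap.id)) →ₗ[ℝ]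
            ↥(LinearMap.ker (θ + LinearMap.id)) →ₗ[ℝ] R |
          ∀ x y, b x y = b y x} := by
  have hD (x : V) : D (D x) = -x := LinearMap.congr_fun hD2 x
  have hθ (x : V) : θ (θ x) = x := LinearMap.congr_fun hθ2 x
  have hDθ (x : V) : D (θ x) = -θ (D x) := LinearMap.congr_fun hDθ x
  refine ⟨fun ω η => rfl, fun c ω => rfl, ?_, ?_, ?_⟩
  · rintro ω ⟨h₁, h₂, -⟩
    exact iota9_symm h₁ h₂
  · rintro ω ⟨-, hω₂, hω₃⟩ η ⟨-, hη₂, hη₃⟩ h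
    ext x y
    rw [eq_iota9_minusPart_rotPlusPart hD hθ hDθ hω₂ hω₃,
      eq_iota9_minusPart_rotPlusPart hD hθ hDθ hη₂ hη₃, h]
  · intro b hb
    exact ⟨iota9Inv hθ hDθ b, ⟨iota9Inv_antisymm hθ hDθ b, iota9Inv_D_skew hD hθ hDθ b hb,
      iota9Inv_θ_θ hθ hDθ b⟩, iota9_iota9Inv hD hθ hDθ b⟩

/-- For D with D² = −id and an involution θ anticommuting with D, the map ω ↦ ω(D·,·)
is a linear bijection from the antisymmetric, D-invariant, θ-anti-invariant R-valued
bilinear maps on V onto the symmetric bilinear maps on V₋. -/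
theorem stmt9 {V R : Type*} [AddCommGroup V] [Module ℝ V] [FiniteDimensional ℝ V]
    [AddCommGroup R] [Module ℝ R] [FiniteDimensional ℝ R]
    (D : V →ₗ[ℝ] V)
    (hD2 : D ∘ₗ D = -LinearMap.id)
    (θ : V →ₗ[ℝ] V)
    (hθ2 : θ ∘ₗ θ = LinearMap.id)
    (hDθ : D ∘ₗ θ = -(θ ∘ₗ D)) :
    (∀ ω η : V →ₗ[ℝ] V →ₗ[ℝ] R, iota9 D θ (ω + η) = iota9 D θ ω + iota9 D θ η) ∧
      (∀ (c : ℝ) (ω : V →ₗ[ℝ] V →ₗ[ℝ] R), iota9 D θ (c • ω) = c • iota9 D θ ω) ∧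
      Set.BijOn (iota9 (R := R) D θ)
        {ω : V →ₗ[ℝ] V →ₗ[ℝ] R | (∀ x y, ω x y = -(ω y x)) ∧
          (∀ x y, ω (D x) y + ω x (D y) = 0) ∧
          (∀ x y, ω (θ x) (θ y) = -(ω x y))}
        {b : ↥(LinearMap.ker (θ + LinearMap.id)) →ₗ[ℝ]
            ↥(LinearMap.ker (θ + LinearMap.id)) →ₗ[ℝ] R |
          ∀ x y, b x y = b y x} :=
  stmt9_general D hD2 θ hθ2 hDθ
end
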